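/- Let C be a small well-founded category in which every morphism factors as a strong epimorphism followed by a monomorphism, and let X be a strongly regular presheaf on C. Then for every n ∈ ℕ: dim X ≤ n if and only if every sequence of n+1 composable morphisms in the full subcategory of the category of elements C/X determined by the minimal objects contains an isomorphism (equivalently, the bounded-depth formula IBD_n holds in the étendue D X). -/

import Mathlib

open CategoryTheory Opposite

universe w v u

namespace PaperEtendue

/-- An element `w` of a Heyting algebra is *widespread* if the lattice of elements
above `w` is complemented. -/
def Widespread {H : Type u} [HeytingAlgebra H] (w : H) : Prop :=
  ∀ v : H, w ≤ v → ∃ v' : H, w ≤ v' ∧ v ⊔ v' = ⊤ ∧ v ⊓ v' = w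

/-- An object is *minimal* if every morphism with that domain is a monomorphism. -/
def Minimal {C : Type u} [Category.{v} C] (c : C) : Prop :=
  ∀ ⦃d : C⦄ (f : c ⟶ d), Mono f

/-- An object is *preterminal* if there is at most one morphism into it from any object. -/
def Preterminal {C : Type u} [Category.{v} C] (c : C) : Prop :=
  ∀ ⦃b : C⦄ (u v : b ⟶ c), u = v

/-- The category of elements `C/X` of a presheaf `X`: objects are pairs `(x, D)`
with `x ∈ X(D)`. -/
structure Elem {C : Type u} [Category.{v} C] (X : Cᵒᵖ ⥤ Type w) : Type max u w where
  base : C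
  elt : X.obj (op base)

/-- Morphisms `(x, D) → (y, E)` in `C/X` are morphisms `f : D → E` of `C` with
`X(f)(y) = x`. -/
instance {C : Type u} [Category.{v} C] (X : Cᵒᵖ ⥤ Type w) : Category (Elem X) where
  Hom a b := {f : a.base ⟶ b.base // X.map f.op b.elt = a.elt}
  id a := ⟨𝟙 a.base, by simp⟩
  comp {a b c} f g := ⟨f.1 ≫ g.1, by
    rw [op_comp, FunctorToTypes.map_comp_apply, g.2, f.2]⟩
  id_comp f := Subtype.ext (Category.id_comp f.1)
  comp_id f := Subtype.ext (Category.comp_id f.1)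
  assoc f g h := Subtype.ext (Category.assoc f.1 g.1 h.1)

/-- A presheaf is *strongly regular* if for every monomorphism of `C/X`
with minimal codomain, the domain is also minimal. -/
def StronglyRegular {C : Type u} [Category.{v} C] (X : Cᵒᵖ ⥤ Type w) : Prop :=
  ∀ ⦃a b : Elem X⦄ (m : a ⟶ b), Mono m → Minimal b → Minimal a

/-- A presheaf is *non-singular* if every minimal object of `C/X` is preterminal. -/
def NonSingular {C : Type u} [Category.{v} C] (X : Cᵒᵖ ⥤ Type w) : Prop :=
  ∀ a : Elem X, Minimal a → Preterminal a

/-- Every morphism factors as a split epimorphism followed by a monomorphism. -/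
def SplitEpiMonoFact (C : Type u) [Category.{v} C] : Prop :=
  ∀ ⦃a b : C⦄ (f : a ⟶ b), ∃ (c : C) (e : a ⟶ c) (m : c ⟶ b),
    IsSplitEpi e ∧ Mono m ∧ e ≫ m = f

/-- Every morphism factors as a strong epimorphism followed by a monomorphism. -/
def StrongEpiMonoFact (C : Type u) [Category.{v} C] : Prop :=
  ∀ ⦃a b : C⦄ (f : a ⟶ b), ∃ (c : C) (e : a ⟶ c) (m : c ⟶ b),
    StrongEpi e ∧ Mono m ∧ e ≫ m = f

/-- The ascending chain condition: every `ℕ`-indexed chain of monomorphisms lying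
over a fixed object via compatible monomorphisms contains an isomorphism. -/
def AscendingChainCondition (C : Type u) [Category.{v} C] : Prop :=
  ∀ (obj : ℕ → C) (c : C) (m : ∀ k : ℕ, obj k ⟶ obj (k + 1)) (i : ∀ k : ℕ, obj k ⟶ c),
    (∀ k, Mono (m k)) → (∀ k, Mono (i k)) → (∀ k, m k ≫ i (k + 1) = i k) →
    ∃ t : ℕ, IsIso (m t)

/-- A category is *well-founded* if every `ℕ`-indexed chain of strong epimorphisms
is eventually constant. -/
def WellFoundedCat (C : Type u) [Category.{v} C] : Prop :=
  ∀ (obj : ℕ → C) (e : ∀ k : ℕ, obj k ⟶ obj (k + 1)),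
    (∀ k, StrongEpi (e k)) → ∃ k : ℕ, ∀ m : ℕ, k ≤ m → IsIso (e m)

/-- `𝔥 c ≤ n`: in every sequence of `n+1` composable monomorphisms ending at `c`,
at least one is an isomorphism. -/
def HeightLE {C : Type u} [Category.{v} C] (c : C) (n : ℕ) : Prop :=
  ∀ (obj : Fin (n + 2) → C) (f : ∀ i : Fin (n + 1), obj i.succ ⟶ obj i.castSucc),
    (∀ i, Mono (f i)) → obj 0 = c → ∃ i, IsIso (f i)

/-- Every sequence of `n+1` composable morphisms in `C` contains an isomorphism. -/
def ChainsContainIso (C : Type u) [Category.{v} C] (n : ℕ) : Prop :=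
  ∀ (obj : Fin (n + 2) → C) (f : ∀ i : Fin (n + 1), obj i.succ ⟶ obj i.castSucc),
    ∃ i, IsIso (f i)

/-- The full subcategory of `C/X` determined by the minimal objects. -/
abbrev MinimalElems {C : Type u} [Category.{v} C] (X : Cᵒᵖ ⥤ Type w) :=
  ObjectProperty.FullSubcategory (fun a : Elem X => Minimal a)

/-- A morphism factors through an object of height below `n`. -/
def FactorsThroughHeightLE {C : Type u} [Category.{v} C] {a b : C} (f : a ⟶ b) (n : ℕ) : Prop :=
  ∃ (c : C) (v : a ⟶ c) (u : c ⟶ b), HeightLE c n ∧ v ≫ u = f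

/-- `dim X ≤ n`: every element of `X` is the restriction of an element along a morphism
factoring through an object of height below `n` (i.e. `X` is `n`-skeletal). -/
def DimLE {C : Type u} [Category.{v} C] (X : Cᵒᵖ ⥤ Type w) (n : ℕ) : Prop :=
  ∀ (D : C) (x : X.obj (op D)), ∃ (E : C) (f : D ⟶ E) (y : X.obj (op E)),
    FactorsThroughHeightLE f n ∧ X.map f.op y = x

/-- A two-sided ideal of morphisms of a category. -/
def IsIdeal {C : Type u} [Category.{v} C] (I : MorphismProperty C) : Prop :=
  ∀ ⦃a b c d : C⦄ (h : a ⟶ b) (f : b ⟶ c) (g : c ⟶ d), I f → I (h ≫ f ≫ g)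

/-- An idempotent ideal: every member factors as a composite of two members. -/
def IsIdempotentIdeal {C : Type u} [Category.{v} C] (I : MorphismProperty C) : Prop :=
  IsIdeal I ∧ ∀ ⦃a b : C⦄ (f : a ⟶ b), I f →
    ∃ (c : C) (h : a ⟶ c) (g : c ⟶ b), I h ∧ I g ∧ h ≫ g = f

/-- The implication sieve `V ⇒ W`. -/
def sieveImp {C : Type u} [Category.{v} C] {D : C} (V W : Sieve D) : Sieve D where
  arrows F h := ∀ ⦃G : C⦄ (g : G ⟶ F), V.arrows (g ≫ h) → W.arrows (g ≫ h)
  downward_closed := by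
    intro F F' h hh g G' g' hv
    have := hh (g' ≫ g) (by simpa using hv)
    simpa using this

/-- `W` is a subpresheaf of `X` given as a family of subsets closed under the action. -/
def IsSubpresheaf {C : Type u} [Category.{v} C] (X : Cᵒᵖ ⥤ Type w)
    (W : ∀ D : Cᵒᵖ, Set (X.obj D)) : Prop :=
  ∀ ⦃D E : Cᵒᵖ⦄ (f : D ⟶ E) ⦃x : X.obj D⦄, x ∈ W D → X.map f x ∈ W E

/-- The implication subpresheaf `(V ⇒ W)(D)`. -/
def impSet {C : Type u} [Category.{v} C] (X : Cᵒᵖ ⥤ Type w)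
    (V W : ∀ D : Cᵒᵖ, Set (X.obj D)) (D : Cᵒᵖ) : Set (X.obj D) :=
  {x | ∀ ⦃E : Cᵒᵖ⦄ (f : D ⟶ E), X.map f x ∈ V E → X.map f x ∈ W E}

/-- `Ξ_k`: the image subpresheaf of the map `C(-, K) → X` corresponding to `k`. -/
def xiSet {C : Type u} [Category.{v} C] (X : Cᵒᵖ ⥤ Type w) {K : C} (k : X.obj (op K))
    (J : Cᵒᵖ) : Set (X.obj J) :=
  {j | ∃ g : op K ⟶ J, X.map g k = j}

/-
Both sides are equivalent to: the base of every minimal object of `C/X` has height at most `n`.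
Every morphism out of a minimal object is mono, so a chain of minimal objects is a chain of
monomorphisms in `C`; conversely, restricting along a chain of monomorphisms that ends at the base
of a minimal object gives, by strong regularity, a chain of minimal objects. If `dim X ≤ n`, a
minimal element is restricted from an object of height at most `n` along a morphism which is then
mono. Conversely, well-foundedness and the factorization system map every element to a minimal
one, whose base serves as the object of small height.
-/

section

variable {C : Type u} [Category.{v} C]

lemma isIso_of_isIso_comp_of_mono {a b c : C} (f : a ⟶ b) (g : b ⟶ c) [Mono g]
    [IsIso (f ≫ g)] : IsIso f := by
  have : IsSplitEpi g := ⟨⟨inv (f ≫ g) ≫ f, by simp⟩⟩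
  have := isIso_of_mono_of_isSplitEpi g
  exact IsIso.of_isIso_comp_right f g

lemma WellFoundedCat.isEmpty_of_forall_exists_strongEpi (hwf : WellFoundedCat C) {ι : Type*}
    (F : ι → C) (step : ∀ i, ∃ (j : ι) (e : F i ⟶ F j), StrongEpi e ∧ ¬ IsIso e) :
    IsEmpty ι := by
  refine ⟨fun i₀ => ?_⟩
  choose next e hse hni using step
  let seq : ℕ → ι := fun k => Nat.rec i₀ (fun _ i => next i) k
  obtain ⟨k, hk⟩ := hwf (fun k => F (seq k)) (fun k => e (seq k)) (fun k => hse (seq k))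
  exact hni (seq k) (hk k le_rfl)

lemma HeightLE.of_mono {c d : C} {n : ℕ} (hc : HeightLE c n) (v : d ⟶ c) [Mono v] :
    HeightLE d n := by
  intro obj f hf h0
  subst h0
  let obj' : Fin (n + 2) → C := Fin.cons c (Fin.tail obj)
  let f' : ∀ i : Fin (n + 1), obj' i.succ ⟶ obj' i.castSucc :=
    Fin.cases (f 0 ≫ v) (fun j => f j.succ)
  -- `f 0` ends at `obj (Fin.castSucc 0)`, only defeq to `obj 0`, so instance search misses `Mono v`
  have hf' : ∀ i, Mono (f' i) :=
    Fin.cases (@mono_comp _ _ _ _ _ (f 0) (hf 0) v ‹Mono v›) (fun j => hf j.succ)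
  obtain ⟨i, hi⟩ := hc obj' f' hf' rfl
  induction i using Fin.cases with
  | zero => exact ⟨0, @isIso_of_isIso_comp_of_mono _ _ _ _ _ (f 0) v ‹Mono v› hi⟩
  | succ j => exact ⟨j.succ, hi⟩

end

namespace Elem

variable {C : Type u} [Category.{v} C] {X : Cᵒᵖ ⥤ Type w}

def restrict (a : Elem X) {D : C} (g : D ⟶ a.base) : Elem X := ⟨D, X.map g.op a.elt⟩

def restrictHom (a : Elem X) {D : C} (g : D ⟶ a.base) : a.restrict g ⟶ a := ⟨g, rfl⟩

lemma map_comp_elt {a b : Elem X} (f : a ⟶ b) {D : C} (g : D ⟶ a.base) :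
    X.map (g ≫ f.1).op b.elt = X.map g.op a.elt := by
  rw [op_comp, Functor.map_comp_apply, f.2]

lemma mono_iff {a b : Elem X} (f : a ⟶ b) : Mono f ↔ Mono f.1 := by
  constructor
  · refine fun hf => ⟨fun {D} g h hgh => ?_⟩
    have hh : X.map h.op a.elt = (a.restrict g).elt := by
      change _ = X.map g.op a.elt
      rw [← map_comp_elt f, ← hgh, map_comp_elt]
    exact congrArg Subtype.val
      (hf.right_cancellation (a.restrictHom g) ⟨h, hh⟩ (Subtype.ext hgh))
  · exact fun hf => ⟨fun g h hgh =>
      Subtype.ext (hf.right_cancellation g.1 h.1 (congrArg Subtype.val hgh))⟩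

lemma isIso_iff {a b : Elem X} (f : a ⟶ b) : IsIso f ↔ IsIso f.1 := by
  refine ⟨fun _ => ⟨(inv f).1, congrArg Subtype.val (IsIso.hom_inv_id f),
    congrArg Subtype.val (IsIso.inv_hom_id f)⟩, fun hf => ?_⟩
  refine ⟨⟨⟨inv f.1, ?_⟩, Subtype.ext (IsIso.hom_inv_id f.1), Subtype.ext (IsIso.inv_hom_id f.1)⟩⟩
  rw [← map_comp_elt f, IsIso.inv_hom_id, op_id, Functor.map_id_apply]

end Elem

section

variable {C : Type u} [Category.{v} C] {X : Cᵒᵖ ⥤ Type w}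

lemma Minimal.mono_base {a b : Elem X} (ha : Minimal a) (f : a ⟶ b) : Mono f.1 :=
  (Elem.mono_iff f).1 (ha f)

lemma exists_strongEpi_of_not_minimal (hfact : StrongEpiMonoFact C) {b : Elem X}
    (hb : ¬ Minimal b) : ∃ (q : Elem X) (g : b ⟶ q), StrongEpi g.1 ∧ ¬ IsIso g.1 := by
  obtain ⟨d, f, hf⟩ : ∃ (d : Elem X) (f : b ⟶ d), ¬ Mono f := by simpa [Minimal] using hb
  obtain ⟨c, e, m, he, hm, hem⟩ := hfact f.1
  refine ⟨d.restrict m, ⟨e, ?_⟩, he, ?_⟩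
  · change X.map e.op (X.map m.op d.elt) = b.elt
    rw [← Functor.map_comp_apply, ← op_comp, hem, f.2]
  · intro (_ : IsIso e)
    rw [Elem.mono_iff, ← hem] at hf
    exact hf inferInstance

lemma exists_hom_minimal (hwf : WellFoundedCat C) (hfact : StrongEpiMonoFact C)
    (a : Elem X) : ∃ b : Elem X, Minimal b ∧ Nonempty (a ⟶ b) := by
  by_contra! h
  refine (hwf.isEmpty_of_forall_exists_strongEpi (fun p : Σ b : Elem X, (a ⟶ b) => p.1.base)
    (fun ⟨b, f⟩ => ?_)).false ⟨a, 𝟙 a⟩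
  obtain ⟨q, g, hg, hni⟩ := exists_strongEpi_of_not_minimal hfact fun hb => (h b hb).false f
  exact ⟨⟨q, f ≫ g⟩, g.1, hg, hni⟩

lemma heightLE_base_of_dimLE {n : ℕ} (hdim : DimLE X n) {a : Elem X} (ha : Minimal a) :
    HeightLE a.base n := by
  obtain ⟨E, -, y, ⟨c, v, u, hc, rfl⟩, hy⟩ := hdim a.base a.elt
  have hv : X.map v.op (X.map u.op y) = a.elt := by rw [← hy, op_comp, Functor.map_comp_apply]
  have := ha.mono_base (b := ⟨c, X.map u.op y⟩) ⟨v, hv⟩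
  exact hc.of_mono v

lemma chainsContainIso_of_heightLE_base {n : ℕ}
    (h : ∀ a : Elem X, Minimal a → HeightLE a.base n) : ChainsContainIso (MinimalElems X) n := by
  intro A F
  obtain ⟨i, hi⟩ := h (A 0).obj (A 0).property (fun j => (A j).obj.base) (fun i => (F i).hom.1)
    (fun i => (A i.succ).property.mono_base _) rfl
  exact ⟨i, (ObjectProperty.isIso_hom_iff _).1 ((Elem.isIso_iff _).2 hi)⟩

lemma heightLE_base_of_chainsContainIso (hreg : StronglyRegular X) {n : ℕ}
    (hch : ChainsContainIso (MinimalElems X) n) {b : Elem X} (hb : Minimal b) :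
    HeightLE b.base n := by
  obtain ⟨D, x⟩ := b
  intro obj f hf h0
  subst h0
  let elt : ∀ j, X.obj (op (obj j)) := Fin.induction x (fun i y => X.map (f i).op y)
  let F : ∀ i : Fin (n + 1), (⟨_, elt i.succ⟩ : Elem X) ⟶ ⟨_, elt i.castSucc⟩ :=
    fun i => ⟨f i, (Fin.induction_succ _ _ i).symm⟩
  have hmin : ∀ j, Minimal (⟨_, elt j⟩ : Elem X) := Fin.induction hb
    (fun i hi => hreg (F i) ((Elem.mono_iff _).2 (hf i)) hi)
  obtain ⟨i, hi⟩ := hch (fun j => ⟨_, hmin j⟩) (fun i => ObjectProperty.homMk (F i))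
  exact ⟨i, (Elem.isIso_iff (F i)).1 ((ObjectProperty.isIso_hom_iff _).2 hi)⟩

lemma dimLE_of_heightLE_base (hwf : WellFoundedCat C) (hfact : StrongEpiMonoFact C) {n : ℕ}
    (h : ∀ a : Elem X, Minimal a → HeightLE a.base n) : DimLE X n := by
  intro D x
  obtain ⟨b, hb, ⟨e⟩⟩ := exists_hom_minimal hwf hfact (⟨D, x⟩ : Elem X)
  exact ⟨b.base, e.1, b.elt, ⟨b.base, e.1, 𝟙 _, h b hb, Category.comp_id _⟩, e.2⟩

end

theorem dim_le_iff_ibd {C : Type u} [Category.{v} C]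
    (hwf : WellFoundedCat C) (hfact : StrongEpiMonoFact C)
    (X : Cᵒᵖ ⥤ Type w) (hreg : StronglyRegular X) (n : ℕ) :
    DimLE X n ↔ ChainsContainIso (MinimalElems X) n :=
  ⟨fun hdim => chainsContainIso_of_heightLE_base fun _ => heightLE_base_of_dimLE hdim,
    fun hch => dimLE_of_heightLE_base hwf hfact fun _ => heightLE_base_of_chainsContainIso hreg hch⟩

end PaperEtendue
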